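/- arXiv:1907.00848 — 2 statements merged into one kernel-verified Lean document; each statement's English description precedes it below -/
import Mathlib

section
/- Let E(s) = ⋃_{n=0}^∞ (1/π)·[n, n+s] for s ∈ [0,1], with Daubechies eigenvalues λ_k(s) = Σ_{n=0}^∞ ∫_n^{n+s} (r^k/k!) e^{-r} dr. Then there exists s_0 > 0 such that for all 0 < s < s_0, sup_{k∈ℕ} λ_k(s) = (1 − e^{-s})·e/(e−1); i.e., the operator norm is attained by the eigenvalue λ_0(s). -/
/-!
`λ₀(s)` is a geometric series: `λ₀(s) = (1 - e^{-s}) e/(e - 1) ≥ s/(1 + s) · e/(e - 1)`.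
For `k ≥ 1` the density `f_k` increases on `[0, k]` and decreases on `[k, ∞)`, so every
unit-spaced sample sum `∑ₙ f_k(t + n)` is at most `∫ f_k + f_k(k) ≤ 1 + 1/e`, the last step
being `k^k ≤ k! e^{k-1}`. Integrating over `t ∈ [0, s]` gives `λ_k(s) ≤ s (1 + 1/e)`, and this
stays below the lower bound for `λ₀(s)` exactly as long as `s ≤ 1/(e² - 1)`.
-/

open Real MeasureTheory

/-- Eigenvalues of the Daubechies localization operator on the set of
equidistant intervals `E(s) = ⋃ₙ (1/π)·[n, n+s]`:
`λ_k(s) = Σ_{n=0}^∞ ∫_n^{n+s} (r^k/k!) e^{-r} dr`. -/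
noncomputable def equidistantEigenvalue (k : ℕ) (s : ℝ) : ℝ :=
  ∑' n : ℕ, ∫ r in (n : ℝ)..((n : ℝ) + s), r ^ k / (Nat.factorial k) * Real.exp (-r)

open Set intervalIntegral

-- The paper's `f_k`: `equidistantEigenvalue k s` unfolds to
-- `∑' n, ∫ r in n..n + s, erlangDensity k r`.
noncomputable def erlangDensity (k : ℕ) (r : ℝ) : ℝ := r ^ k / (Nat.factorial k) * Real.exp (-r)

theorem pow_mul_exp_neg_le_pow_mul_exp_neg (k : ℕ) {x y : ℝ} (hx : 0 ≤ x) (hy : 0 < y)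
    (h : (k - y) * (x - y) ≤ 0) : x ^ k * exp (-x) ≤ y ^ k * exp (-y) := by
  have hpow : (x / y) ^ k ≤ exp (x - y) := calc
    (x / y) ^ k ≤ exp (x / y - 1) ^ k := by
      gcongr
      linarith [add_one_le_exp (x / y - 1)]
    _ = exp (k * (x / y - 1)) := (exp_nat_mul _ _).symm
    _ ≤ exp (x - y) := by
      gcongr
      rw [div_sub_one hy.ne', mul_div_assoc', div_le_iff₀ hy]
      linarith
  calc x ^ k * exp (-x) = (x / y) ^ k * exp (-x) * y ^ k := by
        rw [div_pow]; field_simp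
    _ ≤ exp (x - y) * exp (-x) * y ^ k := by gcongr
    _ = y ^ k * exp (-y) := by rw [← exp_add]; ring_nf

theorem erlangDensity_nonneg (k : ℕ) {r : ℝ} (hr : 0 ≤ r) : 0 ≤ erlangDensity k r := by
  unfold erlangDensity
  positivity

theorem continuous_erlangDensity (k : ℕ) : Continuous (erlangDensity k) := by
  unfold erlangDensity
  fun_prop

theorem erlangDensity_le_erlangDensity (k : ℕ) {x y : ℝ} (hx : 0 ≤ x) (hy : 0 < y)
    (h : (k - y) * (x - y) ≤ 0) : erlangDensity k x ≤ erlangDensity k y := by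
  simp only [erlangDensity, div_mul_eq_mul_div]
  exact div_le_div_of_nonneg_right (pow_mul_exp_neg_le_pow_mul_exp_neg k hx hy h) (by positivity)

theorem monotoneOn_erlangDensity (k : ℕ) : MonotoneOn (erlangDensity k) (Icc 0 k) := by
  intro a ha b hb hab
  rcases hb.1.eq_or_lt with rfl | hb₀
  · rw [le_antisymm hab ha.1]
  · exact erlangDensity_le_erlangDensity k ha.1 hb₀
      (mul_nonpos_of_nonneg_of_nonpos (by linarith [hb.2]) (by linarith))

theorem antitoneOn_erlangDensity (k : ℕ) : AntitoneOn (erlangDensity k) (Ici k) := by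
  rcases eq_or_ne k 0 with rfl | hk
  · intro a _ b _ hab
    simpa [erlangDensity] using neg_le_neg hab
  · intro a ha b hb hab
    have hk₁ : (1 : ℝ) ≤ k := by exact_mod_cast Nat.one_le_iff_ne_zero.2 hk
    exact erlangDensity_le_erlangDensity k (by linarith [mem_Ici.1 hb]) (by linarith [mem_Ici.1 ha])
      (mul_nonpos_of_nonpos_of_nonneg (by linarith [mem_Ici.1 ha]) (by linarith))

theorem integral_erlangDensity_le_one (k : ℕ) {T : ℝ} (hT : 0 ≤ T) :
    ∫ r in 0..T, erlangDensity k r ≤ 1 := by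
  have h := intervalIntegral_pow_mul_exp_neg_le (k := k) hT one_pos
  simp only [one_mul, one_pow, div_one] at h
  calc ∫ r in 0..T, erlangDensity k r = (∫ r in 0..T, r ^ k * exp (-r)) / k.factorial := by
        simp only [erlangDensity, div_mul_eq_mul_div, intervalIntegral.integral_div]
    _ ≤ 1 := by rw [div_le_one (by positivity)]; exact h

theorem pow_self_le_factorial_mul_exp {n : ℕ} (hn : n ≠ 0) :
    (n : ℝ) ^ n ≤ n.factorial * exp (n - 1) := by
  induction n, Nat.one_le_iff_ne_zero.2 hn using Nat.le_induction with
  | base => simp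
  | succ n hn ih =>
    have hn₀ : (n : ℝ) ≠ 0 := by positivity
    calc ((n + 1 : ℕ) : ℝ) ^ (n + 1) = (n + 1) * (n ^ n * (1 + (n : ℝ)⁻¹) ^ n) := by
          rw [← mul_pow, mul_add, mul_inv_cancel₀ hn₀]; push_cast; ring
      _ ≤ (n + 1) * (n.factorial * exp (n - 1) * exp 1) := by
          gcongr
          · exact ih (by omega)
          · exact one_add_inv_pow_le_exp
      _ = (n + 1).factorial * exp ((n + 1 : ℕ) - 1) := by
          rw [mul_assoc (n.factorial : ℝ), ← exp_add, Nat.factorial_succ]; push_cast; ring_nf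

theorem erlangDensity_self_le {k : ℕ} (hk : k ≠ 0) : erlangDensity k k ≤ exp (-1) := by
  have hfac : (0 : ℝ) < k.factorial := by positivity
  calc erlangDensity k k = k ^ k / k.factorial * exp (-k) := rfl
    _ ≤ exp (k - 1) * exp (-k) := by
        gcongr
        rw [div_le_iff₀ hfac, mul_comm]
        exact pow_self_le_factorial_mul_exp hk
    _ = exp (-1) := by rw [← exp_add]; ring_nf

theorem add_le_apply_add_integral_of_monotoneOn_of_antitoneOn {f : ℝ → ℝ} {a c : ℝ}
    (hac : a ≤ c) (hca : c ≤ a + 1) (hmono : MonotoneOn f (Icc a c))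
    (hanti : AntitoneOn f (Icc c (a + 1))) (hf : IntervalIntegrable f volume a (a + 1)) :
    f a + f (a + 1) ≤ f c + ∫ x in a..a + 1, f x := by
  have hmin : min (f a) (f (a + 1)) ≤ ∫ x in a..a + 1, f x := by
    have h := integral_mono_on (f := fun _ ↦ min (f a) (f (a + 1))) (by linarith)
      intervalIntegrable_const hf fun x hx ↦ by
      rcases le_total x c with hxc | hxc
      · exact (min_le_left _ _).trans (hmono ⟨le_rfl, hac⟩ ⟨hx.1, hxc⟩ hx.1)
      · exact (min_le_right _ _).trans (hanti ⟨hxc, hx.2⟩ ⟨hca, le_rfl⟩ hx.2)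
    simpa using h
  have hmax : max (f a) (f (a + 1)) ≤ f c :=
    max_le (hmono ⟨le_rfl, hac⟩ ⟨hac, le_rfl⟩ hac) (hanti ⟨le_rfl, hca⟩ ⟨hca, le_rfl⟩ hca)
  linarith [min_add_max (f a) (f (a + 1))]

theorem sum_range_apply_add_le_of_monotoneOn_of_antitoneOn {f : ℝ → ℝ} {p : ℕ} {t : ℝ}
    (ht₀ : 0 ≤ t) (ht₁ : t ≤ 1) (hmono : MonotoneOn f (Icc 0 (p + 1)))
    (hanti : AntitoneOn f (Ici (p + 1))) (hf : Continuous f) (m : ℕ) :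
    ∑ n ∈ Finset.range (p + 2 + m), f (t + n) ≤ f (p + 1) + ∫ x in t..t + p + 1 + m, f x := by
  have hleft : ∑ n ∈ Finset.range p, f (t + n) ≤ ∫ x in t..t + p, f x :=
    (hmono.mono (Icc_subset_Icc ht₀ (by linarith))).sum_le_integral
  have hmid : f (t + p) + f (t + p + 1) ≤ f (p + 1) + ∫ x in t + p..t + p + 1, f x :=
    add_le_apply_add_integral_of_monotoneOn_of_antitoneOn (by linarith) (by linarith)
      (hmono.mono (Icc_subset_Icc (by positivity) le_rfl)) (hanti.mono Icc_subset_Ici_self)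
      (hf.intervalIntegrable _ _)
  have hright : ∑ i ∈ Finset.range m, f (t + p + 1 + (i + 1 : ℕ))
      ≤ ∫ x in t + p + 1..t + p + 1 + m, f x :=
    (hanti.mono (Icc_subset_Ici_iff (by linarith) |>.2 (by linarith))).sum_le_integral
  have hsplit : ∑ n ∈ Finset.range (p + 2 + m), f (t + n) = ∑ n ∈ Finset.range p, f (t + n)
      + (f (t + p) + f (t + p + 1)) + ∑ i ∈ Finset.range m, f (t + p + 1 + (i + 1 : ℕ)) := by
    have hp : t + ((p + 1 : ℕ) : ℝ) = t + p + 1 := by push_cast; ring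
    have hm (i : ℕ) : t + ((p + 2 + i : ℕ) : ℝ) = t + p + 1 + ((i + 1 : ℕ) : ℝ) := by
      push_cast; ring
    rw [Finset.sum_range_add, Finset.sum_range_succ, Finset.sum_range_succ, hp]
    simp only [hm]
    ring
  rw [hsplit, ← integral_add_adjacent_intervals (hf.intervalIntegrable t (t + p))
    (hf.intervalIntegrable _ (t + p + 1 + m)), ← integral_add_adjacent_intervals
    (hf.intervalIntegrable (t + p) (t + p + 1)) (hf.intervalIntegrable _ (t + p + 1 + m))]
  linarith

theorem sum_range_erlangDensity_add_le {k : ℕ} (hk : k ≠ 0) {t : ℝ} (ht₀ : 0 ≤ t) (ht₁ : t ≤ 1)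
    (N : ℕ) : ∑ n ∈ Finset.range N, erlangDensity k (t + n) ≤ exp (-1) + 1 := by
  obtain ⟨p, rfl⟩ := Nat.exists_eq_add_one_of_ne_zero hk
  have hT : 0 ≤ t + p + 1 + N := by positivity
  calc ∑ n ∈ Finset.range N, erlangDensity (p + 1) (t + n)
      ≤ ∑ n ∈ Finset.range (p + 2 + N), erlangDensity (p + 1) (t + n) :=
        Finset.sum_le_sum_of_subset_of_nonneg (Finset.range_subset_range.2 (by omega))
          fun n _ _ ↦ erlangDensity_nonneg _ (by positivity)
    _ ≤ erlangDensity (p + 1) (p + 1) + ∫ x in t..t + p + 1 + N, erlangDensity (p + 1) x :=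
        sum_range_apply_add_le_of_monotoneOn_of_antitoneOn ht₀ ht₁
          (by exact_mod_cast monotoneOn_erlangDensity (p + 1))
          (by exact_mod_cast antitoneOn_erlangDensity (p + 1)) (continuous_erlangDensity _) N
    _ ≤ exp (-1) + ∫ x in 0..t + p + 1 + N, erlangDensity (p + 1) x := by
        gcongr
        · exact_mod_cast erlangDensity_self_le hk
        · rw [← integral_add_adjacent_intervals
            ((continuous_erlangDensity _).intervalIntegrable 0 t)
            ((continuous_erlangDensity _).intervalIntegrable _ _)]
          exact le_add_of_nonneg_left
            (integral_nonneg ht₀ fun x hx ↦ erlangDensity_nonneg _ hx.1)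
    _ ≤ exp (-1) + 1 := by gcongr; exact integral_erlangDensity_le_one _ hT

theorem sum_range_integral_add_le {f : ℝ → ℝ} (hf : Continuous f) {s C : ℝ} (hs : 0 ≤ s) (N : ℕ)
    (h : ∀ t ∈ Icc 0 s, ∑ n ∈ Finset.range N, f (t + n) ≤ C) :
    ∑ n ∈ Finset.range N, ∫ r in (n : ℝ)..n + s, f r ≤ s * C := by
  calc ∑ n ∈ Finset.range N, ∫ r in (n : ℝ)..n + s, f r
      = ∫ t in 0..s, ∑ n ∈ Finset.range N, f (t + n) := by
        rw [integral_finsetSum (f := fun (n : ℕ) t ↦ f (t + n))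
          fun n _ ↦ (hf.comp (continuous_add_const _)).intervalIntegrable _ _]
        refine Finset.sum_congr rfl fun n _ ↦ ?_
        rw [integral_comp_add_right, zero_add, add_comm s]
    _ ≤ ∫ _ in 0..s, C :=
        integral_mono_on hs ((continuous_finsetSum _ fun n _ ↦
          hf.comp (continuous_add_const _)).intervalIntegrable _ _) intervalIntegrable_const h
    _ = s * C := by simp

theorem equidistantEigenvalue_le {k : ℕ} (hk : k ≠ 0) {s : ℝ} (hs₀ : 0 ≤ s) (hs₁ : s ≤ 1) :
    equidistantEigenvalue k s ≤ s * (exp (-1) + 1) :=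
  tsum_le_of_sum_range_le
    (fun n ↦ integral_nonneg (by linarith) fun r hr ↦
      erlangDensity_nonneg k ((Nat.cast_nonneg n).trans hr.1))
    fun N ↦ sum_range_integral_add_le (continuous_erlangDensity k) hs₀ N fun t ht ↦
      sum_range_erlangDensity_add_le hk ht.1 (ht.2.trans hs₁) N

theorem equidistantEigenvalue_zero (s : ℝ) :
    equidistantEigenvalue 0 s = (1 - exp (-s)) * (exp 1 / (exp 1 - 1)) := by
  have hterm (n : ℕ) : ∫ r in (n : ℝ)..n + s, r ^ 0 / (Nat.factorial 0 : ℝ) * exp (-r)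
      = (1 - exp (-s)) * exp (-1) ^ n := by
    simp only [pow_zero, Nat.factorial_zero, Nat.cast_one, div_one, one_mul]
    rw [integral_comp_neg (fun r ↦ exp r), integral_exp, ← exp_nat_mul, neg_add, exp_add]
    ring_nf
  have he : exp (-1) < 1 := exp_lt_one_iff.2 (by norm_num)
  rw [equidistantEigenvalue, tsum_congr hterm, tsum_mul_left,
    tsum_geometric_of_lt_one (exp_nonneg _) he, exp_neg 1]
  have : exp 1 - 1 ≠ 0 := by linarith [add_one_le_exp 1]
  field_simp

theorem mul_exp_neg_one_add_one_le {s : ℝ} (hs₀ : 0 ≤ s) (hs : s ≤ (exp 2 - 1)⁻¹) :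
    s * (exp (-1) + 1) ≤ (1 - exp (-s)) * (exp 1 / (exp 1 - 1)) := by
  have he : 1 < exp 1 := by linarith [add_one_le_exp 1]
  have hs' : s * (exp 1 ^ 2 - 1) ≤ 1 := by
    have h2 : exp 2 = exp 1 ^ 2 := by rw [← exp_nat_mul]; norm_num
    rw [h2] at hs
    calc s * (exp 1 ^ 2 - 1) ≤ (exp 1 ^ 2 - 1)⁻¹ * (exp 1 ^ 2 - 1) := by gcongr; nlinarith
      _ = 1 := inv_mul_cancel₀ (by nlinarith)
  have hexp : s / (1 + s) ≤ 1 - exp (-s) := by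
    rw [exp_neg, div_le_iff₀ (by positivity)]
    have : 1 + s ≤ exp s := by linarith [add_one_le_exp s]
    field_simp
    nlinarith [exp_pos s]
  calc s * (exp (-1) + 1) ≤ s / (1 + s) * (exp 1 / (exp 1 - 1)) := by
        rw [exp_neg, div_mul_div_comm, le_div_iff₀ (by nlinarith)]
        field_simp
        nlinarith
    _ ≤ (1 - exp (-s)) * (exp 1 / (exp 1 - 1)) := by gcongr

/-- There exists `s₀ > 0` such that for all `0 < s < s₀` the operator norm is
attained by the first eigenvalue: `sup_k λ_k(s) = (1 - e^{-s})·e/(e-1)`. -/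
theorem equidistant_operator_norm_eq_first_eigenvalue :
    ∃ s₀ > (0 : ℝ), ∀ s : ℝ, 0 < s → s < s₀ →
      (⨆ k : ℕ, equidistantEigenvalue k s) =
        (1 - Real.exp (-s)) * (Real.exp 1 / (Real.exp 1 - 1)) := by
  have h2 : 3 ≤ exp 2 := by linarith [add_one_le_exp 2]
  refine ⟨(exp 2 - 1)⁻¹, inv_pos.2 (by linarith), fun s hs hs₀ ↦ ?_⟩
  have hs₁ : s ≤ 1 := hs₀.le.trans (inv_le_one_of_one_le₀ (by linarith))
  have hle (k : ℕ) : equidistantEigenvalue k s ≤ equidistantEigenvalue 0 s := by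
    rcases eq_or_ne k 0 with rfl | hk
    · exact le_rfl
    rw [equidistantEigenvalue_zero]
    exact (equidistantEigenvalue_le hk hs.le hs₁).trans (mul_exp_neg_one_add_one_le hs.le hs₀.le)
  rw [← equidistantEigenvalue_zero]
  exact le_antisymm (ciSup_le hle) (le_ciSup ⟨_, forall_mem_range.2 hle⟩ 0)
end

section
/- There exist positive constants c_1 ≤ c_2 such that for every n ∈ ℕ, if R_n > 0 is chosen so that πR_n^2 = 3^{n/2}, then c_1·(2/3)^{n/2} ≤ sup_{k∈ℕ} ∫_{C_n(πR_n^2)} (r^k/k!) e^{-r} dr ≤ c_2·(2/3)^{n/2}; that is, under the scaling 3^n = (πR^2)^2 the operator norm of the Daubechies operator localizing on the n-iterate spherically symmetric Cantor set decays like (2/3)^{n/2}. -/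
open Real MeasureTheory

/-- The `n`-iterate mid-third Cantor set based in `[0, L]`:
`C₀(L) = [0,L]` and `C_{n+1}(L) = (1/3)·C_n(L) ∪ (2L/3 + (1/3)·C_n(L))`. -/
def cantorIterate : ℕ → ℝ → Set ℝ
  | 0, L => Set.Icc 0 L
  | n + 1, L =>
      (fun x => x / 3) '' cantorIterate n L ∪
        (fun x => 2 * L / 3 + x / 3) '' cantorIterate n L

/-!
Write `L = 3^{n/2}` and `f_k(r) = r^k e^{-r} / k!`. By self-similarity, `C_n(L)` meets every
interval of length `L / 3^j` (`j ≤ n`) in measure at most `2 (2/3)^{n-j} L / 3^j`; for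
`j = ⌊n/2⌋` this window has length `≥ 1`, so `C_n(L)` meets every unit interval in measure at
most `4 (2/3)^{n/2}`. Since `f_k(x) ≤ e² f_k(y)` for `0 ≤ x ≤ y ≤ x + 2`, the supremum of `f_k`
on `[i, i+1)` is at most `e² ∫_{i+1}^{i+2} f_k`, and as `∫ f_k = 1` we get
`∫_{C_n(L)} f_k ≤ 4 e² (2/3)^{n/2}` uniformly in `k`. For the lower bound take `k = 0`: for
`j = ⌈n/2⌉`, `C_n(L)` contains the scaled copy `C_{n-j}(L / 3^j) ⊆ [0, 1]`, of measure at least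
`(2/3)^{n/2} / 2`, on which `e^{-r} ≥ e^{-1}`.
-/

open Set

theorem cantorIterate_subset_Icc (n : ℕ) (L : ℝ) : cantorIterate n L ⊆ Icc 0 L := by
  induction n with
  | zero => exact subset_rfl
  | succ n ih =>
    rintro _ (⟨x, hx, rfl⟩ | ⟨x, hx, rfl⟩) <;> obtain ⟨h0, hL⟩ := ih hx <;>
      constructor <;> linarith

theorem isCompact_cantorIterate (n : ℕ) (L : ℝ) : IsCompact (cantorIterate n L) := by
  induction n with
  | zero => exact isCompact_Icc
  | succ n ih => exact (ih.image (by fun_prop)).union (ih.image (by fun_prop))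

theorem measurableSet_cantorIterate (n : ℕ) (L : ℝ) : MeasurableSet (cantorIterate n L) :=
  (isCompact_cantorIterate n L).isClosed.measurableSet

theorem cantorIterate_mul (n : ℕ) {c : ℝ} (hc : 0 < c) (L : ℝ) :
    cantorIterate n (c * L) = (c * ·) '' cantorIterate n L := by
  induction n with
  | zero => simp [cantorIterate, image_mul_left_Icc' hc]
  | succ n ih =>
    simp only [cantorIterate, ih, image_union, image_image]
    congr 1 <;> congr 1 <;> funext x <;> ring

theorem cantorIterate_div_pow_three_subset (j m : ℕ) (L : ℝ) :
    cantorIterate m (L / 3 ^ j) ⊆ cantorIterate (m + j) L := by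
  induction j generalizing m with
  | zero => simp
  | succ j ih =>
    calc cantorIterate m (L / 3 ^ (j + 1)) = (fun x => x / 3) '' cantorIterate m (L / 3 ^ j) := by
          rw [pow_succ, ← div_div, div_eq_inv_mul _ (3 : ℝ), cantorIterate_mul _ (by norm_num)]
          simp only [div_eq_inv_mul]
      _ ⊆ cantorIterate (m + 1) (L / 3 ^ j) := subset_union_left
      _ ⊆ cantorIterate (m + (j + 1)) L := by rw [← add_assoc, add_right_comm]; exact ih (m + 1)

theorem volume_image_add_div_three (a : ℝ) (S : Set ℝ) :
    volume ((fun x => a + x / 3) '' S) = ENNReal.ofReal (1 / 3) * volume S := by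
  have : (fun x : ℝ => a + x / 3) = AffineMap.homothety (3 * a / 2) (1 / 3 : ℝ) := by
    funext x
    simp only [AffineMap.homothety_apply, vsub_eq_sub, smul_eq_mul, vadd_eq_add]
    ring
  rw [this, Measure.addHaar_image_homothety]
  norm_num

theorem volume_image_div_three (S : Set ℝ) :
    volume ((fun x => x / 3) '' S) = ENNReal.ofReal (1 / 3) * volume S := by
  simpa using volume_image_add_div_three 0 S

theorem volume_image_add_div_three_inter_Ico (a t w : ℝ) (S : Set ℝ) :
    volume ((fun x => a + x / 3) '' S ∩ Ico t (t + w)) =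
      ENNReal.ofReal (1 / 3) * volume (S ∩ Ico (3 * (t - a)) (3 * (t - a) + 3 * w)) := by
  rw [← image_inter_preimage, volume_image_add_div_three]
  congr 3
  ext x
  simp only [mem_preimage, mem_Ico]
  constructor <;> rintro ⟨h₁, h₂⟩ <;> constructor <;> linarith

theorem volume_cantorIterate (n : ℕ) {L : ℝ} (hL : 0 ≤ L) :
    volume (cantorIterate n L) = ENNReal.ofReal ((2 / 3) ^ n * L) := by
  induction n with
  | zero => simp [cantorIterate]
  | succ n ih =>
    have hdisj : AEDisjoint volume ((fun x => x / 3) '' cantorIterate n L)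
        ((fun x => 2 * L / 3 + x / 3) '' cantorIterate n L) := by
      refine measure_mono_null (t := Icc (2 * L / 3) (L / 3)) ?_ (by rw [volume_Icc, ENNReal.ofReal_eq_zero]; linarith)
      rintro _ ⟨⟨x, hx, rfl⟩, ⟨y, hy, hxy⟩⟩
      obtain ⟨hx₀, hxL⟩ := cantorIterate_subset_Icc n L hx
      obtain ⟨hy₀, hyL⟩ := cantorIterate_subset_Icc n L hy
      constructor <;> linarith
    rw [cantorIterate, measure_union₀
      ((isCompact_cantorIterate n L).image (by fun_prop)).measurableSet.nullMeasurableSet hdisj,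
      volume_image_div_three, volume_image_add_div_three, ih, ← ENNReal.ofReal_mul (by norm_num),
      ← ENNReal.ofReal_add (by positivity) (by positivity)]
    ring_nf

theorem volume_cantorIterate_inter_Ico_le {L : ℝ} (hL : 0 ≤ L) {j n : ℕ} (hjn : j ≤ n) (t : ℝ) :
    volume (cantorIterate n L ∩ Ico t (t + L / 3 ^ j)) ≤
      ENNReal.ofReal (2 * ((2 / 3) ^ (n - j) * (L / 3 ^ j))) := by
  induction j generalizing n t with
  | zero =>
    calc volume (cantorIterate n L ∩ _) ≤ volume (cantorIterate n L) :=
          measure_mono inter_subset_left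
      _ = ENNReal.ofReal ((2 / 3) ^ n * L) := volume_cantorIterate n hL
      _ ≤ _ := ENNReal.ofReal_le_ofReal <| by
          simp only [Nat.sub_zero, pow_zero, div_one]
          nlinarith [pow_nonneg (by norm_num : (0 : ℝ) ≤ 2 / 3) n]
  | succ j ih =>
    obtain ⟨n, rfl⟩ : ∃ m, n = m + 1 := ⟨n - 1, by omega⟩
    have hw : L / 3 ^ (j + 1) ≤ L / 3 :=
      div_le_div_of_nonneg_left hL (by norm_num) (le_self_pow₀ (by norm_num) (by omega))
    have hpiece (a : ℝ) : volume ((fun x => a + x / 3) '' cantorIterate n L ∩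
        Ico t (t + L / 3 ^ (j + 1))) ≤
          ENNReal.ofReal (2 * ((2 / 3) ^ (n + 1 - (j + 1)) * (L / 3 ^ (j + 1)))) := by
      have h3w : 3 * (L / 3 ^ (j + 1)) = L / 3 ^ j := by rw [pow_succ]; field_simp
      rw [volume_image_add_div_three_inter_Ico, h3w, Nat.add_sub_add_right]
      calc _ ≤ ENNReal.ofReal (1 / 3) * ENNReal.ofReal (2 * ((2 / 3) ^ (n - j) * (L / 3 ^ j))) := by
            gcongr; exact ih (by omega) _
        _ = _ := by rw [← ENNReal.ofReal_mul (by norm_num), pow_succ]; ring_nf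
    -- a window of length at most `L / 3` cannot meet both halves, which are `L / 3` apart
    obtain ⟨a, ha⟩ : ∃ a : ℝ, cantorIterate (n + 1) L ∩ Ico t (t + L / 3 ^ (j + 1)) ⊆
        (fun x => a + x / 3) '' cantorIterate n L ∩ Ico t (t + L / 3 ^ (j + 1)) := by
      rcases le_or_gt (t + L / 3 ^ (j + 1)) (2 * L / 3) with h | h
      · refine ⟨0, ?_⟩
        rintro _ ⟨⟨x, hx, rfl⟩ | ⟨x, hx, rfl⟩, hW⟩
        · exact ⟨⟨x, hx, zero_add _⟩, hW⟩
        · linarith [(cantorIterate_subset_Icc n L hx).1, hW.2]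
      · refine ⟨2 * L / 3, ?_⟩
        rintro _ ⟨⟨x, hx, rfl⟩ | ⟨x, hx, rfl⟩, hW⟩
        · linarith [(cantorIterate_subset_Icc n L hx).2, hW.1]
        · exact ⟨⟨x, hx, rfl⟩, hW⟩
    exact (measure_mono ha).trans (hpiece a)

theorem setIntegral_le_mul_sum_of_measureReal_inter_Ico_le {S : Set ℝ} (hS : MeasurableSet S)
    {N : ℕ} (hSN : S ⊆ Ico 0 N) {f : ℝ → ℝ} (hf : IntegrableOn f S) {δ : ℝ}
    (hδ : ∀ i : ℕ, volume.real (S ∩ Ico (i : ℝ) (i + 1)) ≤ δ) {M : ℕ → ℝ} (hM₀ : ∀ i, 0 ≤ M i)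
    (hM : ∀ i : ℕ, ∀ x ∈ Ico (i : ℝ) (i + 1), f x ≤ M i) :
    ∫ x in S, f x ≤ δ * ∑ i ∈ Finset.range N, M i := by
  have hcover : S = ⋃ i ∈ Finset.range N, S ∩ Ico (i : ℝ) (i + 1) := by
    refine Subset.antisymm (fun x hx => ?_) (iUnion₂_subset fun _ _ => inter_subset_left)
    have hx0 := (hSN hx).1
    exact mem_biUnion (Finset.mem_range.2 ((Nat.floor_lt hx0).2 (hSN hx).2))
      ⟨hx, Nat.floor_le hx0, Nat.lt_floor_add_one x⟩
  have hdisj : (Finset.range N : Set ℕ).Pairwise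
      (Function.onFun Disjoint fun i : ℕ => S ∩ Ico (i : ℝ) (i + 1)) := by
    intro i _ j _ hij
    have := pairwise_disjoint_Ico_intCast ℝ (Int.ofNat_inj.not.2 hij)
    simp only [Function.onFun, Int.cast_natCast] at this
    exact this.mono inter_subset_right inter_subset_right
  rw [hcover, integral_biUnion_finset _ (fun i _ => hS.inter measurableSet_Ico) hdisj
    (fun i _ => hf.mono_set inter_subset_left), Finset.mul_sum]
  refine Finset.sum_le_sum fun i _ => ?_
  have hfin : volume (S ∩ Ico (i : ℝ) (i + 1)) ≠ ⊤ :=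
    (measure_mono inter_subset_right).trans_lt measure_Ico_lt_top |>.ne
  calc ∫ x in S ∩ Ico (i : ℝ) (i + 1), f x ≤ ∫ _ in S ∩ Ico (i : ℝ) (i + 1), M i :=
        setIntegral_mono_on (hf.mono_set inter_subset_left) (integrableOn_const hfin)
          (hS.inter measurableSet_Ico) fun x hx => hM i x hx.2
    _ = volume.real (S ∩ Ico (i : ℝ) (i + 1)) * M i := by rw [setIntegral_const, smul_eq_mul]
    _ ≤ δ * M i := mul_le_mul_of_nonneg_right (hδ i) (hM₀ i)

noncomputable def gammaDensity (k : ℕ) (r : ℝ) : ℝ := r ^ k / k.factorial * exp (-r)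

theorem continuous_gammaDensity (k : ℕ) : Continuous (gammaDensity k) := by
  unfold gammaDensity; fun_prop

theorem gammaDensity_nonneg (k : ℕ) {r : ℝ} (hr : 0 ≤ r) : 0 ≤ gammaDensity k r := by
  unfold gammaDensity; positivity

theorem integrableOn_gammaDensity_Ioi (k : ℕ) : IntegrableOn (gammaDensity k) (Ioi 0) := by
  refine IntegrableOn.congr_fun
    ((GammaIntegral_convergent (s := k + 1) (by positivity)).div_const k.factorial)
    (fun r _ => ?_) measurableSet_Ioi
  simp only [gammaDensity, add_sub_cancel_right, rpow_natCast]
  ring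

theorem integral_gammaDensity_Ioi (k : ℕ) : ∫ r in Ioi 0, gammaDensity k r = 1 := by
  have hGamma : ∫ r in Ioi (0 : ℝ), r ^ k * exp (-r) = k.factorial := by
    rw [← Gamma_nat_eq_factorial, Gamma_eq_integral (by positivity)]
    refine setIntegral_congr_fun measurableSet_Ioi fun r _ => ?_
    simp [mul_comm]
  simp only [gammaDensity, div_mul_eq_mul_div, integral_div, hGamma]
  exact div_self (by positivity)

theorem gammaDensity_le_exp_sub_mul (k : ℕ) {x y : ℝ} (hx : 0 ≤ x) (hxy : x ≤ y) :
    gammaDensity k x ≤ exp (y - x) * gammaDensity k y := by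
  have hexp : exp (-x) = exp (y - x) * exp (-y) := by rw [← exp_add]; ring_nf
  calc gammaDensity k x = exp (y - x) * (x ^ k / k.factorial * exp (-y)) := by
        rw [gammaDensity, hexp]; ring
    _ ≤ exp (y - x) * gammaDensity k y := by unfold gammaDensity; gcongr

theorem gammaDensity_le_exp_two_mul_integral (k : ℕ) {i : ℕ} {x : ℝ}
    (hx : x ∈ Ico (i : ℝ) (i + 1)) :
    gammaDensity k x ≤ exp 2 * ∫ y in (i + 1 : ℝ)..(i + 2), gammaDensity k y := by
  have hx0 : 0 ≤ x := (Nat.cast_nonneg i).trans hx.1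
  calc gammaDensity k x = ∫ _ in (i + 1 : ℝ)..(i + 2), gammaDensity k x := by
        rw [intervalIntegral.integral_const, smul_eq_mul]; ring
    _ ≤ ∫ y in (i + 1 : ℝ)..(i + 2), exp 2 * gammaDensity k y := by
        refine intervalIntegral.integral_mono_on (by linarith) (by simp)
          ((continuous_const.mul (continuous_gammaDensity k)).intervalIntegrable _ _) fun y hy => ?_
        calc gammaDensity k x ≤ exp (y - x) * gammaDensity k y :=
              gammaDensity_le_exp_sub_mul k hx0 (by linarith [hx.2, hy.1])
          _ ≤ exp 2 * gammaDensity k y := by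
              gcongr
              · exact gammaDensity_nonneg k (by linarith [hy.1])
              · linarith [hx.1, hy.2]
    _ = exp 2 * ∫ y in (i + 1 : ℝ)..(i + 2), gammaDensity k y :=
        intervalIntegral.integral_const_mul _ _

theorem sum_integral_gammaDensity_le_one (k N : ℕ) :
    ∑ i ∈ Finset.range N, ∫ y in (i + 1 : ℝ)..(i + 2), gammaDensity k y ≤ 1 := by
  have hsum := intervalIntegral.sum_integral_adjacent_intervals (f := gammaDensity k)
    (μ := volume) (a := fun i : ℕ => (i + 1 : ℝ)) (n := N)
    (fun i _ => (continuous_gammaDensity k).intervalIntegrable _ _)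
  push_cast [add_assoc, one_add_one_eq_two, zero_add] at hsum
  rw [hsum, intervalIntegral.integral_of_le (by simp)]
  refine (setIntegral_mono_set (integrableOn_gammaDensity_Ioi k) ?_ ?_).trans_eq
    (integral_gammaDensity_Ioi k)
  · exact (ae_restrict_iff' measurableSet_Ioi).2
      (.of_forall fun r hr => gammaDensity_nonneg k (le_of_lt hr))
  · exact (Ioc_subset_Ioi_self.trans (Ioi_subset_Ioi (zero_le_one' ℝ))).eventuallyLE

theorem setIntegral_gammaDensity_le_of_measureReal_inter_Ico_le {S : Set ℝ}
    (hS : MeasurableSet S) {N : ℕ} (hSN : S ⊆ Ico 0 N) {δ : ℝ}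
    (hδ : ∀ i : ℕ, volume.real (S ∩ Ico (i : ℝ) (i + 1)) ≤ δ) (k : ℕ) :
    ∫ r in S, gammaDensity k r ≤ exp 2 * δ := by
  have hδ₀ : 0 ≤ δ := measureReal_nonneg.trans (hδ 0)
  calc ∫ r in S, gammaDensity k r
      ≤ δ * ∑ i ∈ Finset.range N, exp 2 * ∫ y in (i + 1 : ℝ)..(i + 2), gammaDensity k y :=
        setIntegral_le_mul_sum_of_measureReal_inter_Ico_le hS hSN
          ((continuous_gammaDensity k).integrableOn_Icc.mono_set (hSN.trans Ico_subset_Icc_self))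
          hδ (fun i => mul_nonneg (exp_pos 2).le (intervalIntegral.integral_nonneg (by linarith)
            fun y hy => gammaDensity_nonneg k (by linarith [hy.1, Nat.cast_nonneg (α := ℝ) i])))
          fun i x hx => gammaDensity_le_exp_two_mul_integral k hx
    _ = exp 2 * δ * ∑ i ∈ Finset.range N, ∫ y in (i + 1 : ℝ)..(i + 2), gammaDensity k y := by
        rw [← Finset.mul_sum]; ring
    _ ≤ exp 2 * δ * 1 := by gcongr; exact sum_integral_gammaDensity_le_one k N
    _ = exp 2 * δ := mul_one _

theorem two_div_three_pow_sub_mul_three_rpow_half_div_pow {j n : ℕ} (hjn : j ≤ n) :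
    (2 / 3 : ℝ) ^ (n - j) * ((3 : ℝ) ^ ((n : ℝ) / 2) / 3 ^ j) =
      (2 / 3) ^ ((n : ℝ) / 2) * 2 ^ ((n : ℝ) / 2 - j) := by
  have hsplit : ((n - j : ℕ) : ℝ) = n / 2 + (n / 2 - j) := by rw [Nat.cast_sub hjn]; ring
  rw [← rpow_sub_natCast (by norm_num), ← rpow_natCast, hsplit, rpow_add (by norm_num), mul_assoc,
    ← mul_rpow (by norm_num) (by norm_num)]
  norm_num

theorem measureReal_cantorIterate_inter_Ico_le (n : ℕ) (t : ℝ) :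
    volume.real (cantorIterate n (3 ^ ((n : ℝ) / 2)) ∩ Ico t (t + 1)) ≤
      4 * (2 / 3) ^ ((n : ℝ) / 2) := by
  set j := n / 2
  have hj₁ : (2 * j : ℝ) ≤ n := by exact_mod_cast (show 2 * j ≤ n by omega)
  have hj₂ : (n : ℝ) ≤ 2 * j + 1 := by exact_mod_cast (show n ≤ 2 * j + 1 by omega)
  have hw : 1 ≤ (3 : ℝ) ^ ((n : ℝ) / 2) / 3 ^ j := by
    rw [← rpow_sub_natCast (by norm_num)]; exact one_le_rpow (by norm_num) (by linarith)
  have hwindow := volume_cantorIterate_inter_Ico_le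
    (rpow_nonneg (by norm_num : (0 : ℝ) ≤ 3) ((n : ℝ) / 2)) (Nat.div_le_self n 2) t
  rw [two_div_three_pow_sub_mul_three_rpow_half_div_pow (Nat.div_le_self n 2)] at hwindow
  calc volume.real (cantorIterate n (3 ^ ((n : ℝ) / 2)) ∩ Ico t (t + 1))
      ≤ 2 * ((2 / 3) ^ ((n : ℝ) / 2) * 2 ^ ((n : ℝ) / 2 - j)) :=
        ENNReal.toReal_le_of_le_ofReal (by positivity) <|
          (measure_mono (inter_subset_inter_right _ (Ico_subset_Ico_right (by linarith)))).trans
            hwindow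
    _ ≤ 2 * ((2 / 3) ^ ((n : ℝ) / 2) * 2 ^ (1 : ℝ)) := by
        gcongr; exacts [by norm_num, by linarith]
    _ = 4 * (2 / 3) ^ ((n : ℝ) / 2) := by rw [rpow_one]; ring

theorem setIntegral_cantorIterate_gammaDensity_le (n k : ℕ) :
    ∫ r in cantorIterate n (3 ^ ((n : ℝ) / 2)), gammaDensity k r ≤
      4 * exp 2 * (2 / 3) ^ ((n : ℝ) / 2) := by
  set L : ℝ := 3 ^ ((n : ℝ) / 2)
  have hSN : cantorIterate n L ⊆ Ico 0 (⌊L⌋₊ + 1 : ℕ) := fun x hx =>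
    ⟨(cantorIterate_subset_Icc n L hx).1, by
      push_cast; exact (cantorIterate_subset_Icc n L hx).2.trans_lt (Nat.lt_floor_add_one L)⟩
  calc ∫ r in cantorIterate n L, gammaDensity k r ≤ exp 2 * (4 * (2 / 3) ^ ((n : ℝ) / 2)) :=
        setIntegral_gammaDensity_le_of_measureReal_inter_Ico_le (measurableSet_cantorIterate n L)
          hSN (fun i => measureReal_cantorIterate_inter_Ico_le n i) k
    _ = 4 * exp 2 * (2 / 3) ^ ((n : ℝ) / 2) := by ring

theorem exp_neg_one_div_two_mul_le_setIntegral_cantorIterate (n : ℕ) :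
    exp (-1) / 2 * (2 / 3) ^ ((n : ℝ) / 2) ≤
      ∫ r in cantorIterate n (3 ^ ((n : ℝ) / 2)), gammaDensity 0 r := by
  set L : ℝ := 3 ^ ((n : ℝ) / 2)
  set j := (n + 1) / 2
  have hjn : j ≤ n := by omega
  have hj₁ : (n : ℝ) ≤ 2 * j := by exact_mod_cast (show n ≤ 2 * j by omega)
  have hj₂ : (2 * j : ℝ) ≤ n + 1 := by exact_mod_cast (show 2 * j ≤ n + 1 by omega)
  set P := cantorIterate (n - j) (L / 3 ^ j)
  have hPsub : P ⊆ cantorIterate n L := by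
    simpa only [Nat.sub_add_cancel hjn] using cantorIterate_div_pow_three_subset j (n - j) L
  have hL' : L / 3 ^ j ≤ 1 := by
    rw [← rpow_sub_natCast (by norm_num)]
    exact rpow_le_one_of_one_le_of_nonpos (by norm_num) (by linarith)
  have hP01 : P ⊆ Icc 0 1 := (cantorIterate_subset_Icc _ _).trans (Icc_subset_Icc_right hL')
  have hP : volume.real P = (2 / 3) ^ ((n : ℝ) / 2) * 2 ^ ((n : ℝ) / 2 - j) := by
    rw [measureReal_def, volume_cantorIterate _ (by positivity),
      ENNReal.toReal_ofReal (by positivity), two_div_three_pow_sub_mul_three_rpow_half_div_pow hjn]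
  have hint (S : Set ℝ) (hS : IsCompact S) : IntegrableOn (gammaDensity 0) S :=
    (continuous_gammaDensity 0).continuousOn.integrableOn_compact hS
  calc exp (-1) / 2 * (2 / 3) ^ ((n : ℝ) / 2)
      = exp (-1) * ((2 / 3) ^ ((n : ℝ) / 2) * 2 ^ (-1 : ℝ)) := by rw [rpow_neg_one]; ring
    _ ≤ exp (-1) * volume.real P := by
        rw [hP]; gcongr; exacts [by norm_num, by linarith]
    _ ≤ ∫ r in P, gammaDensity 0 r :=
        setIntegral_ge_of_const_le_real (measurableSet_cantorIterate _ _)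
          (isCompact_cantorIterate _ _).measure_lt_top.ne
          (fun r hr => by simpa [gammaDensity] using (hP01 hr).2)
          (hint P (isCompact_cantorIterate _ _))
    _ ≤ ∫ r in cantorIterate n L, gammaDensity 0 r :=
        setIntegral_mono_set (hint _ (isCompact_cantorIterate _ _))
          (.of_forall fun r => by simp [gammaDensity, (exp_pos _).le])
          hPsub.eventuallyLE

/-- Under the scaling `3ⁿ = (πR²)²`, i.e. `πRₙ² = 3^{n/2}`, the operator norm
of the Daubechies operator localizing on the `n`-iterate spherically symmetric
Cantor set decays like `(2/3)^{n/2}`. -/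
theorem cantor_operator_norm_decay :
    ∃ c₁ c₂ : ℝ, 0 < c₁ ∧ c₁ ≤ c₂ ∧
      ∀ n : ℕ, ∀ R : ℝ, 0 < R → π * R ^ 2 = (3 : ℝ) ^ ((n : ℝ) / 2) →
        c₁ * (2 / 3 : ℝ) ^ ((n : ℝ) / 2) ≤
            (⨆ k : ℕ, ∫ r in cantorIterate n (π * R ^ 2),
              r ^ k / (Nat.factorial k) * Real.exp (-r)) ∧
          (⨆ k : ℕ, ∫ r in cantorIterate n (π * R ^ 2),
              r ^ k / (Nat.factorial k) * Real.exp (-r)) ≤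
            c₂ * (2 / 3 : ℝ) ^ ((n : ℝ) / 2) := by
  refine ⟨exp (-1) / 2, 4 * exp 2, by positivity, ?_, fun n R _ hR => ?_⟩
  · linarith [exp_pos (-1), exp_le_exp.2 (show (-1 : ℝ) ≤ 2 by norm_num)]
  have hupper := setIntegral_cantorIterate_gammaDensity_le n
  rw [hR]
  exact ⟨(exp_neg_one_div_two_mul_le_setIntegral_cantorIterate n).trans
    (le_ciSup ⟨_, forall_mem_range.2 hupper⟩ 0), ciSup_le hupper⟩
end
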